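/- arXiv:1808.10007 — 6 statements merged into one kernel-verified Lean document; each statement's English description precedes it below -/
import Mathlib

section
/- (Soundness and completeness of K45m) For every set Γ of modal formulas and every modal formula α: Γ ⊢_K45m α if and only if Γ ⊨_{M_K45m} α, where M_K45m is the eight-valued Nmatrix obtained from M_Km by replacing the multioperator for □. -/
/- ## Syntax of the modal language -/

inductive Form : Type
  | var : Nat → Form
  | neg : Form → Form
  | imp : Form → Form → Form
  | box : Form → Form
  deriving DecidableEq

namespace Form
/-- ◇α := ¬□¬α -/
def dia (α : Form) : Form := neg (box (neg α))
/-- α∨β := ¬α→β -/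
def disj (α β : Form) : Form := imp (neg α) β
/-- α∧β := ¬(α→¬β) -/
def conj (α β : Form) : Form := neg (imp α (neg β))
end Form

open Form

/-- Substitution instances of classical tautologies over {¬,→}: formulas true under
every Boolean assignment that respects negation and implication. -/
def Taut (φ : Form) : Prop :=
  ∀ v : Form → Bool,
    (∀ α, v (Form.neg α) = !(v α)) →
    (∀ α β, v (Form.imp α β) = (!(v α) || v β)) →
    v φ = true

/-- Hilbert-style derivations from a set of premises, with Modus Ponens as the only
inference rule, given a set `Ax` of axioms. -/
inductive Deriv (Ax : Form → Prop) (Γ : Set Form) : Form → Prop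
  | prem {φ : Form} : φ ∈ Γ → Deriv Ax Γ φ
  | ax {φ : Form} : Ax φ → Deriv Ax Γ φ
  | mp {φ ψ : Form} : Deriv Ax Γ (Form.imp φ ψ) → Deriv Ax Γ φ → Deriv Ax Γ ψ

/- ## Axiom schemas -/

def axK (α β : Form) : Form := (box (α.imp β)).imp ((box α).imp (box β))
def axK1 (α β : Form) : Form := (box (α.imp β)).imp ((dia α).imp (dia β))
def axK2 (α β : Form) : Form := (dia (α.imp β)).imp ((box α).imp (dia β))
def axM1 (α β : Form) : Form := (Form.neg (dia α)).imp (box (α.imp β))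
def axM2 (α β : Form) : Form := (box β).imp (box (α.imp β))
def axM3 (α β : Form) : Form := (dia β).imp (dia (α.imp β))
def axM4 (α β : Form) : Form := (dia (Form.neg α)).imp (dia (α.imp β))
def axT (α : Form) : Form := (box α).imp α
def axD (α : Form) : Form := (box α).imp (dia α)
def axDN1 (α : Form) : Form := (box α).imp (box (Form.neg (Form.neg α)))
def axDN2 (α : Form) : Form := (box (Form.neg (Form.neg α))).imp (box α)
def ax4 (α : Form) : Form := (box α).imp (box (box α))
def ax5 (α : Form) : Form := (dia (box α)).imp (box α)
def axKdet (α β : Form) : Form := (box (α.imp β)).imp ((dia α).imp (box β))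

def axK' (α β : Form) : Form := (dia α).imp (axK α β)
def axK1' (α β : Form) : Form := (dia (Form.neg β)).imp (axK1 α β)
def axK2' (α β : Form) : Form := (dia α).imp (axK2 α β)
def axM3' (α β : Form) : Form := ((dia α).disj (dia (Form.neg α))).imp (axM3 α β)
def axM4' (α β : Form) : Form := (dia (Form.neg β)).imp (axM4 α β)
def axI1 (α β : Form) : Form :=
  ((box α).conj (box (Form.neg α))).imp ((box (α.imp β)).conj (box (Form.neg (α.imp β))))
def axI2 (α β : Form) : Form :=
  ((box β).conj (box (Form.neg β))).imp ((box (α.imp β)).conj (box (Form.neg (α.imp β))))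

/-- The recovery operator ∘α := □α→◇α. -/
def circm (α : Form) : Form := (box α).imp (dia α)
/-- •α := ¬∘α. -/
def bulm (α : Form) : Form := Form.neg (circm α)
/-- The recovery operator ∘'α := (□α→α)∧(□¬α→¬α). -/
def circm' (α : Form) : Form :=
  ((box α).imp α).conj ((box (Form.neg α)).imp (Form.neg α))

/- ## Hilbert calculi -/

/-- The system Km. -/
inductive KmAx : Form → Prop
  | pc {φ : Form} : Taut φ → KmAx φ
  | k' (α β : Form) : KmAx (axK' α β)
  | k1' (α β : Form) : KmAx (axK1' α β)
  | k2' (α β : Form) : KmAx (axK2' α β)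
  | m1 (α β : Form) : KmAx (axM1 α β)
  | m2 (α β : Form) : KmAx (axM2 α β)
  | m3' (α β : Form) : KmAx (axM3' α β)
  | m4' (α β : Form) : KmAx (axM4' α β)
  | i1 (α β : Form) : KmAx (axI1 α β)
  | i2 (α β : Form) : KmAx (axI2 α β)
  | dn1 (α : Form) : KmAx (axDN1 α)
  | dn2 (α : Form) : KmAx (axDN2 α)

/-- The system K4m = Km + (4). -/
inductive K4mAx : Form → Prop
  | km {φ : Form} : KmAx φ → K4mAx φ
  | four (α : Form) : K4mAx (ax4 α)

/-- The system K45m = Km + (4) + (5). -/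
inductive K45mAx : Form → Prop
  | km {φ : Form} : KmAx φ → K45mAx φ
  | four (α : Form) : K45mAx (ax4 α)
  | five (α : Form) : K45mAx (ax5 α)

/-- The system Dm. -/
inductive DmAx : Form → Prop
  | pc {φ : Form} : Taut φ → DmAx φ
  | k (α β : Form) : DmAx (axK α β)
  | k1 (α β : Form) : DmAx (axK1 α β)
  | k2 (α β : Form) : DmAx (axK2 α β)
  | m1 (α β : Form) : DmAx (axM1 α β)
  | m2 (α β : Form) : DmAx (axM2 α β)
  | m3 (α β : Form) : DmAx (axM3 α β)
  | m4 (α β : Form) : DmAx (axM4 α β)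
  | d (α : Form) : DmAx (axD α)
  | dn1 (α : Form) : DmAx (axDN1 α)
  | dn2 (α : Form) : DmAx (axDN2 α)

/-- The system Tm. -/
inductive TmAx : Form → Prop
  | pc {φ : Form} : Taut φ → TmAx φ
  | k (α β : Form) : TmAx (axK α β)
  | k1 (α β : Form) : TmAx (axK1 α β)
  | k2 (α β : Form) : TmAx (axK2 α β)
  | m1 (α β : Form) : TmAx (axM1 α β)
  | m2 (α β : Form) : TmAx (axM2 α β)
  | m3 (α β : Form) : TmAx (axM3 α β)
  | m4 (α β : Form) : TmAx (axM4 α β)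
  | t (α : Form) : TmAx (axT α)
  | dn1 (α : Form) : TmAx (axDN1 α)
  | dn2 (α : Form) : TmAx (axDN2 α)

/-- The system T45m = Tm + (4) + (5). -/
inductive T45mAx : Form → Prop
  | tm {φ : Form} : TmAx φ → T45mAx φ
  | four (α : Form) : T45mAx (ax4 α)
  | five (α : Form) : T45mAx (ax5 α)

/-- The system Tmd: Tm with (K1) replaced by (Kdet). -/
inductive TmdAx : Form → Prop
  | pc {φ : Form} : Taut φ → TmdAx φ
  | k (α β : Form) : TmdAx (axK α β)
  | kdet (α β : Form) : TmdAx (axKdet α β)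
  | k2 (α β : Form) : TmdAx (axK2 α β)
  | m1 (α β : Form) : TmdAx (axM1 α β)
  | m2 (α β : Form) : TmdAx (axM2 α β)
  | m3 (α β : Form) : TmdAx (axM3 α β)
  | m4 (α β : Form) : TmdAx (axM4 α β)
  | t (α : Form) : TmdAx (axT α)
  | dn1 (α : Form) : TmdAx (axDN1 α)
  | dn2 (α : Form) : TmdAx (axDN2 α)

/-- The system Tm4d = Tmd + (4). -/
inductive Tm4dAx : Form → Prop
  | tmd {φ : Form} : TmdAx φ → Tm4dAx φ
  | four (α : Form) : Tm4dAx (ax4 α)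

/-- The system Tm + (Kdet). -/
inductive TmKdetAx : Form → Prop
  | tm {φ : Form} : TmAx φ → TmKdetAx φ
  | kdet (α β : Form) : TmKdetAx (axKdet α β)

/-- The system Km∘. -/
inductive KmCircAx : Form → Prop
  | pc {φ : Form} : Taut φ → KmCircAx φ
  | k'' (α β : Form) : KmCircAx ((circm α).imp (axK α β))
  | k1'' (α β : Form) : KmCircAx ((circm β).imp (axK1 α β))
  | k2'' (α β : Form) : KmCircAx ((circm α).imp (axK2 α β))
  | m1 (α β : Form) : KmCircAx (axM1 α β)
  | m2 (α β : Form) : KmCircAx (axM2 α β)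
  | m3'' (α β : Form) : KmCircAx ((circm α).imp (axM3 α β))
  | m4'' (α β : Form) : KmCircAx ((circm β).imp (axM4 α β))
  | i1' (α β : Form) : KmCircAx ((bulm α).imp (bulm (α.imp β)))
  | i2' (α β : Form) : KmCircAx ((bulm β).imp (bulm (α.imp β)))
  | dn1 (α : Form) : KmCircAx (axDN1 α)
  | dn2 (α : Form) : KmCircAx (axDN2 α)

/- ## The eight-valued non-deterministic semantics -/

/-- The modal "letters" T, C, F, I. -/
inductive Ltr : Type
  | T | C | F | I
  deriving DecidableEq

/-- An eight-valued truth-value: a letter together with a sign (`true` = +). -/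
structure V8 where
  ltr : Ltr
  sgn : Bool
  deriving DecidableEq

/-- Designated values: those with sign +. -/
def V8.desig (x : V8) : Prop := x.sgn = true

/-- Letter of the negation. -/
def lneg : Ltr → Ltr
  | .T => .F
  | .C => .C
  | .F => .T
  | .I => .I

/-- The (deterministic) multioperator for ¬. -/
def neg8 (x : V8) : Set V8 := {⟨lneg x.ltr, !x.sgn⟩}

/-- Set of possible letters of an implication, given the letters of the components. -/
def limp : Ltr → Ltr → Set Ltr
  | .I, _ => {Ltr.I}
  | .T, .I => {Ltr.I}
  | .C, .I => {Ltr.I}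
  | .F, .I => {Ltr.I}
  | .T, .T => {Ltr.T}
  | .T, .C => {Ltr.C}
  | .T, .F => {Ltr.F}
  | .C, .T => {Ltr.T}
  | .C, .C => {Ltr.T, Ltr.C}
  | .C, .F => {Ltr.C}
  | .F, .T => {Ltr.T}
  | .F, .C => {Ltr.T}
  | .F, .F => {Ltr.T}

/-- The multioperator for →: sign is material implication of the signs, letter as in `limp`. -/
def imp8 (x y : V8) : Set V8 :=
  { z | z.ltr ∈ limp x.ltr y.ltr ∧ z.sgn = (!x.sgn || y.sgn) }

/-- The multioperator for □ in (the Nmatrix for) Km. -/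
def box8Km (x : V8) : Set V8 :=
  if x.ltr = Ltr.T ∨ x.ltr = Ltr.I then { z | z.sgn = true } else { z | z.sgn = false }

/-- The multioperator for □ in the Nmatrix for K4m. -/
def box8K4m (x : V8) : Set V8 :=
  if x.ltr = Ltr.T ∨ x.ltr = Ltr.I then ({⟨Ltr.T, true⟩, ⟨Ltr.I, true⟩} : Set V8)
  else { z | z.sgn = false }

/-- The multioperator for □ in the Nmatrix for K45m. -/
def box8K45m (x : V8) : Set V8 :=
  if x.ltr = Ltr.T ∨ x.ltr = Ltr.I then ({⟨Ltr.T, true⟩, ⟨Ltr.I, true⟩} : Set V8)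
  else ({⟨Ltr.F, false⟩, ⟨Ltr.I, false⟩} : Set V8)

/-- A valuation over the eight-valued Nmatrix with the given □-multioperator. -/
def IsVal8 (boxOp : V8 → Set V8) (v : Form → V8) : Prop :=
  (∀ α, v (Form.neg α) ∈ neg8 (v α)) ∧
  (∀ α β, v (Form.imp α β) ∈ imp8 (v α) (v β)) ∧
  (∀ α, v (Form.box α) ∈ boxOp (v α))

/-- Semantic consequence over the eight-valued Nmatrix with the given □-multioperator. -/
def NmEntails (boxOp : V8 → Set V8) (Γ : Set Form) (φ : Form) : Prop :=
  ∀ v : Form → V8, IsVal8 boxOp v → (∀ γ ∈ Γ, (v γ).desig) → (v φ).desig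

/- ## Multialgebras -/

/-- A multialgebra over {¬,→,□}, presented on the carrier `V8` with a chosen domain. -/
structure MAlg where
  dom : Set V8
  negOp : V8 → Set V8
  impOp : V8 → V8 → Set V8
  boxOp : V8 → Set V8

/-- `A` is a submultialgebra of `B`. -/
def SubMAlg (A B : MAlg) : Prop :=
  A.dom ⊆ B.dom ∧
  (∀ x ∈ A.dom, A.negOp x ⊆ B.negOp x) ∧
  (∀ x ∈ A.dom, ∀ y ∈ A.dom, A.impOp x y ⊆ B.impOp x y) ∧
  (∀ x ∈ A.dom, A.boxOp x ⊆ B.boxOp x)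

/-- Domain of the Nmatrix for Dm: the six non-I values. -/
def domDm : Set V8 := { x | x.ltr ≠ Ltr.I }

/-- Domain of the Nmatrix for Tm: {T+, C+, C−, F−}. -/
def domTm : Set V8 :=
  ({⟨Ltr.T, true⟩, ⟨Ltr.C, true⟩, ⟨Ltr.C, false⟩, ⟨Ltr.F, false⟩} : Set V8)

/-- The multialgebra underlying the Nmatrix for Km. -/
def A_Km : MAlg := ⟨Set.univ, neg8, imp8, box8Km⟩

/-- The □-multioperator of Dm: T ↦ {T+,C+,F+}, C∪F ↦ {T−,C−,F−}. -/
def boxDm (x : V8) : Set V8 :=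
  if x.ltr = Ltr.T then { z | z.sgn = true } ∩ domDm else { z | z.sgn = false } ∩ domDm

/-- The multialgebra underlying the Nmatrix for Dm. -/
def A_Dm : MAlg :=
  ⟨domDm, fun x => neg8 x ∩ domDm, fun x y => imp8 x y ∩ domDm, boxDm⟩

/-- The □-multioperator of Tm: T+ ↦ {T+,C+}, and C+, C−, F− ↦ {C−,F−}. -/
def boxTm (x : V8) : Set V8 :=
  if x = ⟨Ltr.T, true⟩ then ({⟨Ltr.T, true⟩, ⟨Ltr.C, true⟩} : Set V8)
  else ({⟨Ltr.C, false⟩, ⟨Ltr.F, false⟩} : Set V8)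

/-- The multialgebra underlying the Nmatrix for Tm. -/
def A_Tm : MAlg :=
  ⟨domTm, fun x => neg8 x ∩ domTm, fun x y => imp8 x y ∩ domTm, boxTm⟩

/- ## The four-valued Nmatrix for Tmd -/

/-- The four values T+, C+, C−, F−. -/
inductive V4 : Type
  | Tp | Cp | Cm | Fm
  deriving DecidableEq

/-- Designated values of the Tmd Nmatrix: T+ and C+. -/
def V4.desig (x : V4) : Prop := x = V4.Tp ∨ x = V4.Cp

/-- Negation: deterministic. -/
def neg4 : V4 → V4
  | .Tp => .Fm
  | .Cp => .Cm
  | .Cm => .Cp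
  | .Fm => .Tp

/-- Position in the chain F− < C− < C+ < T+. -/
def rank4 : V4 → Nat
  | .Fm => 0
  | .Cm => 1
  | .Cp => 2
  | .Tp => 3

def ofRank4 : Nat → V4
  | 0 => .Fm
  | 1 => .Cm
  | 2 => .Cp
  | _ => .Tp

/-- The deterministic implication of Tmd: x→y is the maximum of ¬x and y in the chain. -/
def imp4 (x y : V4) : V4 := ofRank4 (max (rank4 (neg4 x)) (rank4 y))

/-- The □-multioperator of Tmd: T+ ↦ {T+,C+}; C+, C−, F− ↦ {C−,F−}. -/
def box4 (x : V4) : Set V4 :=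
  if x = V4.Tp then ({V4.Tp, V4.Cp} : Set V4) else ({V4.Cm, V4.Fm} : Set V4)

/-- A valuation over the Nmatrix for Tmd. -/
def IsVal4 (v : Form → V4) : Prop :=
  (∀ α, v (Form.neg α) = neg4 (v α)) ∧
  (∀ α β, v (Form.imp α β) = imp4 (v α) (v β)) ∧
  (∀ α, v (Form.box α) ∈ box4 (v α))

/-- Semantic consequence over the Nmatrix for Tmd. -/
def TmdEntails (Γ : Set Form) (φ : Form) : Prop :=
  ∀ v : Form → V4, IsVal4 v → (∀ γ ∈ Γ, (v γ).desig) → (v φ).desig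

/- ## Deterministic logical matrices -/

/-- A deterministic logical matrix over the signature {¬,→,□}. -/
structure DetMatrix where
  carrier : Type
  negOp : carrier → carrier
  impOp : carrier → carrier → carrier
  boxOp : carrier → carrier
  desig : Set carrier

/-- A valuation (homomorphism) over a deterministic matrix. -/
def DetMatrix.IsVal (Mat : DetMatrix) (h : Form → Mat.carrier) : Prop :=
  (∀ α, h (Form.neg α) = Mat.negOp (h α)) ∧
  (∀ α β, h (Form.imp α β) = Mat.impOp (h α) (h β)) ∧
  (∀ α, h (Form.box α) = Mat.boxOp (h α))

/-- Semantic consequence over a deterministic matrix. -/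
def DetMatrix.Entails (Mat : DetMatrix) (Γ : Set Form) (φ : Form) : Prop :=
  ∀ h : Form → Mat.carrier, Mat.IsVal h → (∀ γ ∈ Γ, h γ ∈ Mat.desig) → h φ ∈ Mat.desig

/-- Validity in a deterministic matrix. -/
def DetMatrix.Valid (Mat : DetMatrix) (φ : Form) : Prop :=
  ∀ h : Form → Mat.carrier, Mat.IsVal h → h φ ∈ Mat.desig

/- ## The Dugundji formulas δ(m) -/

/-- Left-associated disjunction of a nonempty list of formulas. -/
def bigOr : List Form → Form
  | [] => Form.var 0
  | a :: l => l.foldl Form.disj a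

/-- α(m): the left-associated disjunction of the variables p_1, …, p_m. -/
def alphaF (m : Nat) : Form := bigOr ((List.range m).map Form.var)

/-- β_i(m): the left-associated disjunction of p_1, …, p_m with p_i omitted. -/
def betaF (m i : Nat) : Form :=
  bigOr (((List.range m).filter (fun j => j != i)).map Form.var)

/-- δ(m): the left-associated disjunction of the formulas □α(m)→□β_i(m), 1 ≤ i ≤ m. -/
def deltaF (m : Nat) : Form :=
  bigOr ((List.range m).map (fun i => (Form.box (alphaF m)).imp (Form.box (betaF m i))))

/-!
Soundness: the sign of `□φ` in `M_K45m` depends only on the letter of `φ`, and `□` only takes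
the values `T+, I+, F−, I−`; so each axiom instance is designated by a finite check over letters,
and Modus Ponens preserves the sign `+`.

Completeness: extend `Γ ⊬ α` to a set `Δ` maximal among those not deriving `α`. The canonical
valuation gives `φ` the sign of `φ ∈ Δ` and a letter recording which of `□φ`, `□¬φ` lie in `Δ`.
The Km axioms are exactly the constraints making the letter of `φ → ψ` one that the multioperator
for `→` allows, and (4), (5) put `□φ` in `{T+, I+}` when `□φ ∈ Δ` and in `{F−, I−}` otherwise.
-/

section Tautologies

variable (φ ψ χ : Form)

theorem taut_imp_self : Taut (φ.imp φ) := by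
  intro w _ hi; simp only [hi]; cases w φ <;> rfl

theorem taut_imp_imp_self : Taut (φ.imp (ψ.imp φ)) := by
  intro w _ hi; simp only [hi]; cases w φ <;> cases w ψ <;> rfl

theorem taut_imp_distrib : Taut ((φ.imp (ψ.imp χ)).imp ((φ.imp ψ).imp (φ.imp χ))) := by
  intro w _ hi; simp only [hi]; cases w φ <;> cases w ψ <;> cases w χ <;> rfl

theorem taut_imp_neg_imp : Taut (φ.imp (φ.neg.imp ψ)) := by
  intro w hn hi; simp only [hi, hn]; cases w φ <;> cases w ψ <;> rfl

theorem taut_neg_imp : Taut (φ.neg.imp (φ.imp ψ)) := by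
  intro w hn hi; simp only [hi, hn]; cases w φ <;> cases w ψ <;> rfl

theorem taut_by_cases : Taut ((φ.imp ψ).imp ((φ.neg.imp ψ).imp ψ)) := by
  intro w hn hi; simp only [hi, hn]; cases w φ <;> cases w ψ <;> rfl

end Tautologies

namespace Deriv

variable {Ax : Form → Prop} {Γ Δ : Set Form} {φ ψ : Form}

theorem mono (hΓΔ : Γ ⊆ Δ) (h : Deriv Ax Γ φ) : Deriv Ax Δ φ := by
  induction h with
  | prem h => exact prem (hΓΔ h)
  | ax h => exact ax h
  | mp _ _ ih₁ ih₂ => exact mp ih₁ ih₂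

theorem imp_intro (hTaut : ∀ {χ}, Taut χ → Ax χ) (h : Deriv Ax (insert φ Γ) ψ) :
    Deriv Ax Γ (φ.imp ψ) := by
  induction h with
  | @prem χ h =>
    rcases Set.mem_insert_iff.mp h with rfl | h
    · exact ax (hTaut (taut_imp_self _))
    · exact mp (ax (hTaut (taut_imp_imp_self χ φ))) (prem h)
  | @ax χ h => exact mp (ax (hTaut (taut_imp_imp_self χ φ))) (ax h)
  | @mp χ θ _ _ ih₁ ih₂ => exact mp (mp (ax (hTaut (taut_imp_distrib φ χ θ))) ih₁) ih₂

theorem exists_mem_of_sUnion {c : Set (Set Form)} (hc : IsChain (· ⊆ ·) c) (hne : c.Nonempty)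
    (h : Deriv Ax (⋃₀ c) φ) : ∃ Δ ∈ c, Deriv Ax Δ φ := by
  induction h with
  | prem h => obtain ⟨Δ, hΔ, hφ⟩ := h; exact ⟨Δ, hΔ, prem hφ⟩
  | ax h => obtain ⟨Δ, hΔ⟩ := hne; exact ⟨Δ, hΔ, ax h⟩
  | mp _ _ ih₁ ih₂ =>
    obtain ⟨Δ₁, h₁, d₁⟩ := ih₁
    obtain ⟨Δ₂, h₂, d₂⟩ := ih₂
    rcases hc.total h₁ h₂ with h | h
    · exact ⟨Δ₂, h₂, mp (d₁.mono h) d₂⟩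
    · exact ⟨Δ₁, h₁, mp d₁ (d₂.mono h)⟩

end Deriv

def boxSgn : Ltr → Bool
  | .T | .I => true
  | .C | .F => false

theorem box8K45m_subset_box8Km (x : V8) : box8K45m x ⊆ box8Km x := by
  unfold box8K45m box8Km
  split_ifs <;> simp [Set.insert_subset_iff]

theorem box8K45m_subset (x : V8) :
    box8K45m x ⊆ {⟨.T, true⟩, ⟨.I, true⟩, ⟨.F, false⟩, ⟨.I, false⟩} := by
  unfold box8K45m
  split_ifs <;> simp [Set.insert_subset_iff]

namespace IsVal8

variable {boxOp : V8 → Set V8} {v : Form → V8} (hv : IsVal8 boxOp v)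
include hv

theorem sgn_neg (φ : Form) : (v φ.neg).sgn = !(v φ).sgn := by
  rw [Set.mem_singleton_iff.mp (hv.1 φ)]

theorem ltr_neg (φ : Form) : (v φ.neg).ltr = lneg (v φ).ltr := by
  rw [Set.mem_singleton_iff.mp (hv.1 φ)]

theorem sgn_imp (φ ψ : Form) : (v (φ.imp ψ)).sgn = (!(v φ).sgn || (v ψ).sgn) :=
  (hv.2.1 φ ψ).2

theorem ltr_imp_mem (φ ψ : Form) : (v (φ.imp ψ)).ltr ∈ limp (v φ).ltr (v ψ).ltr :=
  (hv.2.1 φ ψ).1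

theorem sgn_box (hbox : ∀ x, boxOp x ⊆ box8Km x) (φ : Form) :
    (v φ.box).sgn = boxSgn (v φ).ltr := by
  have h := hbox _ (hv.2.2 φ)
  unfold box8Km at h
  cases hl : (v φ).ltr <;> simpa [hl, boxSgn] using h

end IsVal8

theorem KmAx.desig {boxOp : V8 → Set V8} {v : Form → V8} (hbox : ∀ x, boxOp x ⊆ box8Km x)
    (hv : IsVal8 boxOp v) {φ : Form} (h : KmAx φ) : (v φ).desig := by
  cases h with
  | pc h => exact h (fun χ => (v χ).sgn) hv.sgn_neg hv.sgn_imp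
  | dn1 α | dn2 α =>
    simp only [V8.desig, axDN1, axDN2, hv.sgn_imp, hv.sgn_box hbox, hv.ltr_neg]
    cases (v α).ltr <;> rfl
  | k' α β | k1' α β | k2' α β | m1 α β | m2 α β | m3' α β | m4' α β | i1 α β | i2 α β =>
    have hl := hv.ltr_imp_mem α β
    simp only [V8.desig, axK', axK, axK1', axK1, axK2', axK2, axM1, axM2, axM3', axM3, axM4',
      axM4, axI1, axI2, dia, disj, conj, hv.sgn_imp, hv.sgn_neg, hv.sgn_box hbox, hv.ltr_neg]
    revert hl
    cases (v α).ltr <;> cases (v β).ltr <;> cases (v (α.imp β)).ltr <;> simp [limp, lneg, boxSgn]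

theorem K45mAx.desig {v : Form → V8} (hv : IsVal8 box8K45m v) {φ : Form} (h : K45mAx φ) :
    (v φ).desig := by
  cases h with
  | km h => exact h.desig box8K45m_subset_box8Km hv
  | four α | five α =>
    simp only [V8.desig, ax4, ax5, dia, hv.sgn_imp, hv.sgn_neg, hv.ltr_neg,
      hv.sgn_box box8K45m_subset_box8Km α.box, hv.sgn_box box8K45m_subset_box8Km α.box.neg]
    rcases box8K45m_subset _ (hv.2.2 α) with h | h | h | h <;> rw [h] <;> rfl

theorem Deriv.desig {Ax : Form → Prop} {boxOp : V8 → Set V8} {v : Form → V8} {Γ : Set Form}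
    {φ : Form} (hv : IsVal8 boxOp v) (hAx : ∀ {χ}, Ax χ → (v χ).desig)
    (hΓ : ∀ γ ∈ Γ, (v γ).desig) (h : Deriv Ax Γ φ) : (v φ).desig := by
  induction h with
  | prem h => exact hΓ _ h
  | ax h => exact hAx h
  | mp _ _ ih₁ ih₂ =>
    simp only [V8.desig, hv.sgn_imp] at ih₁ ih₂ ⊢
    simpa [ih₂] using ih₁

def IsRelMax (Ax : Form → Prop) (α : Form) (Δ : Set Form) : Prop :=
  ¬ Deriv Ax Δ α ∧ ∀ φ, φ ∉ Δ → Deriv Ax (insert φ Δ) α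

theorem exists_isRelMax_superset {Ax : Form → Prop} {Γ : Set Form} {α : Form}
    (h : ¬ Deriv Ax Γ α) : ∃ Δ, Γ ⊆ Δ ∧ IsRelMax Ax α Δ := by
  obtain ⟨Δ, hΓΔ, hΔ, hmax⟩ := zorn_subset_nonempty {S : Set Form | ¬ Deriv Ax S α}
    (fun c hcS hc hne => ⟨⋃₀ c, fun hder => by
      obtain ⟨S, hS, hd⟩ := hder.exists_mem_of_sUnion hc hne
      exact hcS hS hd, fun _ => Set.subset_sUnion_of_mem⟩) Γ h
  refine ⟨Δ, hΓΔ, hΔ, fun φ hφ => ?_⟩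
  by_contra hd
  exact hφ (hmax hd (Set.subset_insert φ Δ) (Set.mem_insert φ Δ))

namespace IsRelMax

variable {Ax : Form → Prop} {α : Form} {Δ : Set Form}

theorem mem_of_deriv (hΔ : IsRelMax Ax α Δ) (hTaut : ∀ {χ}, Taut χ → Ax χ) {φ : Form}
    (h : Deriv Ax Δ φ) : φ ∈ Δ := by
  by_contra hφ
  exact hΔ.1 (.mp ((hΔ.2 φ hφ).imp_intro hTaut) h)

theorem neg_mem_iff (hΔ : IsRelMax Ax α Δ) (hTaut : ∀ {χ}, Taut χ → Ax χ) (φ : Form) :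
    φ.neg ∈ Δ ↔ φ ∉ Δ := by
  refine ⟨fun hn h => hΔ.1 (.mp (.mp (.ax (hTaut (taut_imp_neg_imp φ α))) (.prem h)) (.prem hn)),
    fun h => ?_⟩
  by_contra hn
  exact hΔ.1 (.mp (.mp (.ax (hTaut (taut_by_cases φ α))) ((hΔ.2 φ h).imp_intro hTaut))
    ((hΔ.2 _ hn).imp_intro hTaut))

theorem imp_mem_iff (hΔ : IsRelMax Ax α Δ) (hTaut : ∀ {χ}, Taut χ → Ax χ) (φ ψ : Form) :
    φ.imp ψ ∈ Δ ↔ (φ ∈ Δ → ψ ∈ Δ) := by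
  refine ⟨fun h hφ => hΔ.mem_of_deriv hTaut (.mp (.prem h) (.prem hφ)), fun h => ?_⟩
  by_cases hφ : φ ∈ Δ
  · exact hΔ.mem_of_deriv hTaut (.mp (.ax (hTaut (taut_imp_imp_self ψ φ))) (.prem (h hφ)))
  · exact hΔ.mem_of_deriv hTaut
      (.mp (.ax (hTaut (taut_neg_imp φ ψ))) (.prem ((hΔ.neg_mem_iff hTaut φ).mpr hφ)))

theorem conj_mem_iff (hΔ : IsRelMax Ax α Δ) (hTaut : ∀ {χ}, Taut χ → Ax χ) (φ ψ : Form) :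
    φ.conj ψ ∈ Δ ↔ φ ∈ Δ ∧ ψ ∈ Δ := by
  rw [conj, hΔ.neg_mem_iff hTaut, hΔ.imp_mem_iff hTaut, hΔ.neg_mem_iff hTaut]
  tauto

theorem disj_mem_iff (hΔ : IsRelMax Ax α Δ) (hTaut : ∀ {χ}, Taut χ → Ax χ) (φ ψ : Form) :
    φ.disj ψ ∈ Δ ↔ φ ∈ Δ ∨ ψ ∈ Δ := by
  rw [disj, hΔ.imp_mem_iff hTaut, hΔ.neg_mem_iff hTaut]
  tauto

theorem dia_mem_iff (hΔ : IsRelMax Ax α Δ) (hTaut : ∀ {χ}, Taut χ → Ax χ) (φ : Form) :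
    φ.dia ∈ Δ ↔ φ.neg.box ∉ Δ :=
  hΔ.neg_mem_iff hTaut _

theorem box_neg_neg_mem_iff (hΔ : IsRelMax Ax α Δ) (hKm : ∀ {χ}, KmAx χ → Ax χ) (φ : Form) :
    φ.neg.neg.box ∈ Δ ↔ φ.box ∈ Δ :=
  ⟨fun h => hΔ.mem_of_deriv (hKm ∘ .pc) (.mp (.ax (hKm (.dn2 φ))) (.prem h)),
    fun h => hΔ.mem_of_deriv (hKm ∘ .pc) (.mp (.ax (hKm (.dn1 φ))) (.prem h))⟩

end IsRelMax

/-- The letter of a formula `φ` in the canonical valuation, read off from whether `□φ` and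
`□¬φ` hold: `T` = only `□φ`, `F` = only `□¬φ`, `I` = both, `C` = neither. -/
def letterOf (hasBox hasBoxNeg : Bool) : Ltr :=
  if hasBox then (if hasBoxNeg then .I else .T) else (if hasBoxNeg then .F else .C)

/-- The instances of the Km axioms (K'), (K1'), (K2'), (M1), (M2), (M3'), (M4'), (I1), (I2),
with `a, a', b, b', g, g'` the truth of `□φ, □¬φ, □ψ, □¬ψ, □(φ→ψ), □¬(φ→ψ)`, force the
letter of `φ → ψ` into `limp`. -/
theorem letterOf_mem_limp (a a' b b' g g' : Bool)
    (hK : a' = false → g = true → a = true → b = true)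
    (hK1 : b = false → g = true → a' = false → b' = false)
    (hK2 : a' = false → g' = false → a = true → b' = false)
    (hM1 : a' = true → g = true)
    (hM2 : b = true → g = true)
    (hM3 : a' = false ∨ a = false → b' = false → g' = false)
    (hM4 : b = false → a = false → g' = false)
    (hI1 : a = true → a' = true → g = true ∧ g' = true)
    (hI2 : b = true → b' = true → g = true ∧ g' = true) :
    letterOf g g' ∈ limp (letterOf a a') (letterOf b b') := by
  cases a <;> cases a' <;> cases b <;> cases b' <;> cases g <;> cases g' <;>
    simp [letterOf, limp] at *

open Classical in
noncomputable def canonVal (Δ : Set Form) (φ : Form) : V8 :=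
  ⟨letterOf (decide (φ.box ∈ Δ)) (decide (φ.neg.box ∈ Δ)), decide (φ ∈ Δ)⟩

open Classical in
theorem canonVal_desig_iff {Δ : Set Form} {φ : Form} : (canonVal Δ φ).desig ↔ φ ∈ Δ :=
  decide_eq_true_iff

namespace IsRelMax

variable {Ax : Form → Prop} {α : Form} {Δ : Set Form} (hΔ : IsRelMax Ax α Δ)
  (hKm : ∀ {χ}, KmAx χ → Ax χ)
include hΔ hKm

theorem canonVal_neg_mem (φ : Form) : canonVal Δ φ.neg ∈ neg8 (canonVal Δ φ) := by
  have hneg := hΔ.neg_mem_iff (hKm ∘ .pc) φ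
  have hnn := hΔ.box_neg_neg_mem_iff hKm φ
  refine congrArg₂ V8.mk ?_ ?_
  · by_cases φ.box ∈ Δ <;> by_cases φ.neg.box ∈ Δ <;> simp [canonVal, letterOf, lneg, *]
  · by_cases φ ∈ Δ <;> simp [canonVal, *]

theorem canonVal_imp_mem (φ ψ : Form) :
    canonVal Δ (φ.imp ψ) ∈ imp8 (canonVal Δ φ) (canonVal Δ ψ) := by
  have hTaut : ∀ {χ}, Taut χ → Ax χ := hKm ∘ .pc
  have mem : ∀ {χ}, KmAx χ → χ ∈ Δ := fun h => hΔ.mem_of_deriv hTaut (.ax (hKm h))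
  have himp := hΔ.imp_mem_iff hTaut
  have hneg := hΔ.neg_mem_iff hTaut
  have hconj := hΔ.conj_mem_iff hTaut
  have hdisj := hΔ.disj_mem_iff hTaut
  have hdia := hΔ.dia_mem_iff hTaut
  have hbox_neg_neg := hΔ.box_neg_neg_mem_iff hKm
  refine ⟨?_, ?_⟩
  · apply letterOf_mem_limp <;>
      simp only [decide_eq_true_eq, decide_eq_false_iff_not]
    · simpa [axK', axK, himp, hdia] using mem (.k' φ ψ)
    · simpa [axK1', axK1, himp, hdia, hbox_neg_neg] using mem (.k1' φ ψ)
    · simpa [axK2', axK2, himp, hdia] using mem (.k2' φ ψ)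
    · simpa [axM1, himp, hneg, hdia] using mem (.m1 φ ψ)
    · simpa [axM2, himp] using mem (.m2 φ ψ)
    · simpa [axM3', axM3, himp, hdisj, hdia, hbox_neg_neg] using mem (.m3' φ ψ)
    · simpa [axM4', axM4, himp, hdia, hbox_neg_neg] using mem (.m4' φ ψ)
    · simpa [axI1, himp, hconj] using mem (.i1 φ ψ)
    · simpa [axI2, himp, hconj] using mem (.i2 φ ψ)
  · by_cases φ ∈ Δ <;> by_cases ψ ∈ Δ <;> simp [canonVal, hΔ.imp_mem_iff hTaut, *]

theorem canonVal_box_mem (h4 : ∀ χ, Ax (ax4 χ)) (h5 : ∀ χ, Ax (ax5 χ)) (φ : Form) :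
    canonVal Δ φ.box ∈ box8K45m (canonVal Δ φ) := by
  have hTaut : ∀ {χ}, Taut χ → Ax χ := hKm ∘ .pc
  have four : φ.box ∈ Δ → φ.box.box ∈ Δ := fun h =>
    hΔ.mem_of_deriv hTaut (.mp (.ax (h4 φ)) (.prem h))
  have five : φ.box ∉ Δ → φ.box.neg.box ∈ Δ := by
    have h := hΔ.mem_of_deriv hTaut (.ax (h5 φ))
    rw [ax5, hΔ.imp_mem_iff hTaut, hΔ.dia_mem_iff hTaut] at h
    tauto
  by_cases hb : φ.box ∈ Δ
  · by_cases φ.neg.box ∈ Δ <;> by_cases φ.box.neg.box ∈ Δ <;>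
      simp [box8K45m, canonVal, letterOf, four hb, *]
  · by_cases φ.neg.box ∈ Δ <;> by_cases φ.box.box ∈ Δ <;>
      simp [box8K45m, canonVal, letterOf, five hb, *]

theorem isVal8_box8K45m_canonVal (h4 : ∀ χ, Ax (ax4 χ)) (h5 : ∀ χ, Ax (ax5 χ)) :
    IsVal8 box8K45m (canonVal Δ) :=
  ⟨hΔ.canonVal_neg_mem hKm, hΔ.canonVal_imp_mem hKm, hΔ.canonVal_box_mem hKm h4 h5⟩

end IsRelMax

/-- Soundness and completeness of K45m with respect to its eight-valued Nmatrix. -/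
theorem K45m_sound_complete (Γ : Set Form) (α : Form) :
    Deriv K45mAx Γ α ↔ NmEntails box8K45m Γ α := by
  refine ⟨fun h v hv hΓ => h.desig hv (K45mAx.desig hv) hΓ, fun hE => ?_⟩
  by_contra hα
  obtain ⟨Δ, hΓΔ, hΔ⟩ := exists_isRelMax_superset hα
  have hv := hΔ.isVal8_box8K45m_canonVal K45mAx.km .four .five
  have hαΔ : α ∈ Δ :=
    canonVal_desig_iff.mp (hE _ hv fun γ hγ => canonVal_desig_iff.mpr (hΓΔ hγ))
  exact hΔ.1 (.prem hαΔ)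
end

section
/- The systems Km and Km∘ coincide: for every set Γ of modal formulas and every modal formula α, Γ ⊢_Km α if and only if Γ ⊢_{Km∘} α. -/
open Form

/- ## Auxiliary lemmas for Km = Km∘ -/

section KmEq

lemma deriv_trans {A1 A2 : Form → Prop}
    (h : ∀ φ, A1 φ → ∀ Γ : Set Form, Deriv A2 Γ φ) {Γ : Set Form} {α : Form}
    (d : Deriv A1 Γ α) : Deriv A2 Γ α := by
  induction d with
  | prem hp => exact .prem hp
  | ax ha => exact h _ ha _
  | mp _ _ ih1 ih2 => exact .mp ih1 ih2

variable (α β : Form)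

lemma T_k' : Taut (((circm α).imp (axK α β)).imp (axK' α β)) := by
  intro v hn hi
  simp only [circm, axK, axK', dia, hi, hn]
  generalize v (Form.box (α.imp β)) = a
  generalize v (Form.box α) = p
  generalize v (Form.box (Form.neg α)) = q
  generalize v (Form.box β) = e
  revert a p q e; decide

lemma T_k1' : Taut ((axDN1 β).imp (((circm β).imp (axK1 α β)).imp (axK1' α β))) := by
  intro v hn hi
  simp only [axDN1, circm, axK1, axK1', dia, hi, hn]
  generalize v (Form.box (α.imp β)) = a
  generalize v (Form.box (Form.neg α)) = q
  generalize v (Form.box β) = e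
  generalize v (Form.box (Form.neg β)) = c
  generalize v (Form.box (Form.neg (Form.neg β))) = d
  revert a q e c d; decide

lemma T_k2' : Taut (((circm α).imp (axK2 α β)).imp (axK2' α β)) := by
  intro v hn hi
  simp only [circm, axK2, axK2', dia, hi, hn]
  generalize v (Form.box (Form.neg (α.imp β))) = s
  generalize v (Form.box α) = p
  generalize v (Form.box (Form.neg α)) = q
  generalize v (Form.box (Form.neg β)) = c
  revert s p q c; decide

lemma T_m3' : Taut ((axDN1 α).imp (((circm α).imp (axM3 α β)).imp (axM3' α β))) := by
  intro v hn hi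
  simp only [axDN1, circm, axM3, axM3', dia, disj, hi, hn]
  generalize v (Form.box α) = p
  generalize v (Form.box (Form.neg α)) = q
  generalize v (Form.box (Form.neg (Form.neg α))) = r
  generalize v (Form.box (Form.neg β)) = c
  generalize v (Form.box (Form.neg (α.imp β))) = s
  revert p q r c s; decide

lemma T_m4' : Taut ((axDN1 β).imp (((circm β).imp (axM4 α β)).imp (axM4' α β))) := by
  intro v hn hi
  simp only [axDN1, circm, axM4, axM4', dia, hi, hn]
  generalize v (Form.box β) = e
  generalize v (Form.box (Form.neg β)) = c
  generalize v (Form.box (Form.neg (Form.neg β))) = d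
  generalize v (Form.box (Form.neg (Form.neg α))) = r
  generalize v (Form.box (Form.neg (α.imp β))) = s
  revert e c d r s; decide

lemma T_i1 : Taut (((bulm α).imp (bulm (α.imp β))).imp (axI1 α β)) := by
  intro v hn hi
  simp only [bulm, circm, axI1, dia, conj, hi, hn]
  generalize v (Form.box α) = p
  generalize v (Form.box (Form.neg α)) = q
  generalize v (Form.box (α.imp β)) = a
  generalize v (Form.box (Form.neg (α.imp β))) = s
  revert p q a s; decide

lemma T_i2 : Taut (((bulm β).imp (bulm (α.imp β))).imp (axI2 α β)) := by
  intro v hn hi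
  simp only [bulm, circm, axI2, dia, conj, hi, hn]
  generalize v (Form.box β) = e
  generalize v (Form.box (Form.neg β)) = c
  generalize v (Form.box (α.imp β)) = a
  generalize v (Form.box (Form.neg (α.imp β))) = s
  revert e c a s; decide

lemma T_k'' : Taut ((axK' α β).imp ((circm α).imp (axK α β))) := by
  intro v hn hi
  simp only [circm, axK, axK', dia, hi, hn]
  generalize v (Form.box (α.imp β)) = a
  generalize v (Form.box α) = p
  generalize v (Form.box (Form.neg α)) = q
  generalize v (Form.box β) = e
  revert a p q e; decide

lemma T_k1'' : Taut ((axDN2 β).imp ((axK1' α β).imp ((circm β).imp (axK1 α β)))) := by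
  intro v hn hi
  simp only [axDN2, circm, axK1, axK1', dia, hi, hn]
  generalize v (Form.box (α.imp β)) = a
  generalize v (Form.box (Form.neg α)) = q
  generalize v (Form.box β) = e
  generalize v (Form.box (Form.neg β)) = c
  generalize v (Form.box (Form.neg (Form.neg β))) = d
  revert a q e c d; decide

lemma T_k2'' : Taut ((axK2' α β).imp ((circm α).imp (axK2 α β))) := by
  intro v hn hi
  simp only [circm, axK2, axK2', dia, hi, hn]
  generalize v (Form.box (Form.neg (α.imp β))) = s
  generalize v (Form.box α) = p
  generalize v (Form.box (Form.neg α)) = q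
  generalize v (Form.box (Form.neg β)) = c
  revert s p q c; decide

lemma T_m3'' : Taut ((axDN2 α).imp ((axM3' α β).imp ((circm α).imp (axM3 α β)))) := by
  intro v hn hi
  simp only [axDN2, circm, axM3, axM3', dia, disj, hi, hn]
  generalize v (Form.box α) = p
  generalize v (Form.box (Form.neg α)) = q
  generalize v (Form.box (Form.neg (Form.neg α))) = r
  generalize v (Form.box (Form.neg β)) = c
  generalize v (Form.box (Form.neg (α.imp β))) = s
  revert p q r c s; decide

lemma T_m4'' :
    Taut ((axDN2 β).imp ((axM4' α β).imp ((axM3' α β).imp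
      ((circm β).imp (axM4 α β))))) := by
  intro v hn hi
  simp only [axDN2, circm, axM3', axM3, axM4, axM4', dia, disj, hi, hn]
  generalize v (Form.box β) = e
  generalize v (Form.box (Form.neg β)) = c
  generalize v (Form.box (Form.neg (Form.neg β))) = d
  generalize v (Form.box (Form.neg α)) = q
  generalize v (Form.box (Form.neg (Form.neg α))) = r
  generalize v (Form.box (Form.neg (α.imp β))) = s
  revert e c d q r s; decide

lemma T_i1' : Taut ((axI1 α β).imp ((bulm α).imp (bulm (α.imp β)))) := by
  intro v hn hi
  simp only [bulm, circm, axI1, dia, conj, hi, hn]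
  generalize v (Form.box α) = p
  generalize v (Form.box (Form.neg α)) = q
  generalize v (Form.box (α.imp β)) = a
  generalize v (Form.box (Form.neg (α.imp β))) = s
  revert p q a s; decide

lemma T_i2' : Taut ((axI2 α β).imp ((bulm β).imp (bulm (α.imp β)))) := by
  intro v hn hi
  simp only [bulm, circm, axI2, dia, conj, hi, hn]
  generalize v (Form.box β) = e
  generalize v (Form.box (Form.neg β)) = c
  generalize v (Form.box (α.imp β)) = a
  generalize v (Form.box (Form.neg (α.imp β))) = s
  revert e c a s; decide

end KmEq

/-- The systems Km and Km∘ coincide. -/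
theorem Km_eq_KmCirc (Γ : Set Form) (α : Form) :
    Deriv KmAx Γ α ↔ Deriv KmCircAx Γ α := by
  constructor
  · intro h
    refine deriv_trans ?_ h
    intro φ hφ Γ'
    cases hφ with
    | pc ht => exact .ax (KmCircAx.pc ht)
    | k' a b => exact .mp (.ax (.pc (T_k' a b))) (.ax (KmCircAx.k'' a b))
    | k1' a b =>
        exact .mp (.mp (.ax (.pc (T_k1' a b))) (.ax (KmCircAx.dn1 b))) (.ax (KmCircAx.k1'' a b))
    | k2' a b => exact .mp (.ax (.pc (T_k2' a b))) (.ax (KmCircAx.k2'' a b))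
    | m1 a b => exact .ax (KmCircAx.m1 a b)
    | m2 a b => exact .ax (KmCircAx.m2 a b)
    | m3' a b =>
        exact .mp (.mp (.ax (.pc (T_m3' a b))) (.ax (KmCircAx.dn1 a))) (.ax (KmCircAx.m3'' a b))
    | m4' a b =>
        exact .mp (.mp (.ax (.pc (T_m4' a b))) (.ax (KmCircAx.dn1 b))) (.ax (KmCircAx.m4'' a b))
    | i1 a b => exact .mp (.ax (.pc (T_i1 a b))) (.ax (KmCircAx.i1' a b))
    | i2 a b => exact .mp (.ax (.pc (T_i2 a b))) (.ax (KmCircAx.i2' a b))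
    | dn1 a => exact .ax (KmCircAx.dn1 a)
    | dn2 a => exact .ax (KmCircAx.dn2 a)
  · intro h
    refine deriv_trans ?_ h
    intro φ hφ Γ'
    cases hφ with
    | pc ht => exact .ax (KmAx.pc ht)
    | k'' a b => exact .mp (.ax (.pc (T_k'' a b))) (.ax (KmAx.k' a b))
    | k1'' a b =>
        exact .mp (.mp (.ax (.pc (T_k1'' a b))) (.ax (KmAx.dn2 b))) (.ax (KmAx.k1' a b))
    | k2'' a b => exact .mp (.ax (.pc (T_k2'' a b))) (.ax (KmAx.k2' a b))
    | m1 a b => exact .ax (KmAx.m1 a b)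
    | m2 a b => exact .ax (KmAx.m2 a b)
    | m3'' a b =>
        exact .mp (.mp (.ax (.pc (T_m3'' a b))) (.ax (KmAx.dn2 a))) (.ax (KmAx.m3' a b))
    | m4'' a b =>
        exact .mp (.mp (.mp (.ax (.pc (T_m4'' a b))) (.ax (KmAx.dn2 b)))
          (.ax (KmAx.m4' a b))) (.ax (KmAx.m3' a b))
    | i1' a b => exact .mp (.ax (.pc (T_i1' a b))) (.ax (KmAx.i1 a b))
    | i2' a b => exact .mp (.ax (.pc (T_i2' a b))) (.ax (KmAx.i2 a b))
    | dn1 a => exact .ax (KmAx.dn1 a)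
    | dn2 a => exact .ax (KmAx.dn2 a)
end

section
/- (Derivability Adjustment Theorem between Km and Dm) For every set Γ ∪ {φ} of modal formulas: Γ ⊢_Dm φ if and only if there exists a set Υ of modal formulas such that Γ ∪ {∘δ : δ ∈ Υ} ⊢_Km φ, where ∘δ denotes the formula □δ→◇δ. -/
open Form

/- ## Auxiliary lemmas for the DAT -/

namespace DATaux

open Form

lemma taut1 (A B C D : Form) :
    Taut ((A.imp B.neg).imp
      (((B.neg).imp (C.imp (A.imp D))).imp (C.imp (A.imp D)))) := by
  intro v hn hi
  simp only [hi, hn]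
  cases v A <;> cases v B <;> cases v C <;> cases v D <;> rfl

lemma taut2 (E F C X Y : Form) :
    Taut ((E.neg.imp (C.imp (X.neg.imp Y.neg))).imp
      ((E.imp F).imp ((F.imp Y.neg).imp (C.imp (X.neg.imp Y.neg))))) := by
  intro v hn hi
  simp only [hi, hn]
  cases v E <;> cases v F <;> cases v C <;> cases v X <;> cases v Y <;> rfl

lemma taut4 (A B H Cb G : Form) :
    Taut ((A.imp B.neg).imp ((H.imp A).imp
      (((B.neg.neg.imp H.neg).imp (Cb.neg.imp G.neg)).imp (Cb.neg.imp G.neg)))) := by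
  intro v hn hi
  simp only [hi, hn]
  cases v A <;> cases v B <;> cases v H <;> cases v Cb <;> cases v G <;> rfl

lemma taut5 (E F K G H : Form) :
    Taut ((E.neg.imp (H.neg.imp G.neg)).imp ((E.imp F).imp
      ((F.imp K).imp ((K.imp G.neg).imp (H.neg.imp G.neg))))) := by
  intro v hn hi
  simp only [hi, hn]
  cases v E <;> cases v F <;> cases v K <;> cases v G <;> cases v H <;> rfl

lemma taut_weak (X Y : Form) : Taut (X.imp (Y.imp X)) := by
  intro v hn hi
  simp only [hi, hn]
  cases v X <;> cases v Y <;> rfl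

lemma taut_i (A B K G : Form) :
    Taut ((A.imp B.neg).imp
      (((A.imp B.neg).neg).imp ((K.imp G.neg).neg))) := by
  intro v hn hi
  simp only [hi, hn]
  cases v A <;> cases v B <;> cases v K <;> cases v G <;> rfl

/-- Every Km axiom is derivable in Dm. -/
lemma km_ax_in_dm {Γ : Set Form} {φ : Form} (h : KmAx φ) : Deriv DmAx Γ φ := by
  cases h with
  | pc h => exact .ax (DmAx.pc h)
  | k' α β =>
      exact .mp (.ax (DmAx.pc (taut_weak (axK α β) (dia α)))) (.ax (DmAx.k α β))
  | k1' α β =>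
      exact .mp (.ax (DmAx.pc (taut_weak (axK1 α β) (dia (Form.neg β))))) (.ax (DmAx.k1 α β))
  | k2' α β =>
      exact .mp (.ax (DmAx.pc (taut_weak (axK2 α β) (dia α)))) (.ax (DmAx.k2 α β))
  | m1 α β => exact .ax (DmAx.m1 α β)
  | m2 α β => exact .ax (DmAx.m2 α β)
  | m3' α β =>
      exact .mp (.ax (DmAx.pc (taut_weak (axM3 α β) ((dia α).disj (dia (Form.neg α))))))
        (.ax (DmAx.m3 α β))
  | m4' α β =>
      exact .mp (.ax (DmAx.pc (taut_weak (axM4 α β) (dia (Form.neg β))))) (.ax (DmAx.m4 α β))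
  | i1 α β =>
      exact .mp (.ax (DmAx.pc (taut_i (box α) (box (Form.neg α)) (box (α.imp β))
        (box (Form.neg (α.imp β)))))) (.ax (DmAx.d α))
  | i2 α β =>
      exact .mp (.ax (DmAx.pc (taut_i (box β) (box (Form.neg β)) (box (α.imp β))
        (box (Form.neg (α.imp β)))))) (.ax (DmAx.d β))
  | dn1 α => exact .ax (DmAx.dn1 α)
  | dn2 α => exact .ax (DmAx.dn2 α)

/-- Every Dm axiom is derivable in Km from all recovery premises. -/
lemma dm_ax_in_km {Γ : Set Form} {φ : Form} (h : DmAx φ) :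
    Deriv KmAx (Γ ∪ (circm '' Set.univ)) φ := by
  have hcirc : ∀ δ : Form, Deriv KmAx (Γ ∪ (circm '' Set.univ)) (circm δ) :=
    fun δ => .prem (Or.inr ⟨δ, trivial, rfl⟩)
  cases h with
  | pc h => exact .ax (KmAx.pc h)
  | k α β =>
      exact .mp (.mp (.ax (KmAx.pc
        (taut1 (box α) (box (Form.neg α)) (box (α.imp β)) (box β))))
        (hcirc α)) (.ax (KmAx.k' α β))
  | k1 α β =>
      exact .mp (.mp (.mp (.ax (KmAx.pc
        (taut2 (box (Form.neg (Form.neg β))) (box β) (box (α.imp β))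
          (box (Form.neg α)) (box (Form.neg β)))))
        (.ax (KmAx.k1' α β))) (.ax (KmAx.dn2 β))) (hcirc β)
  | k2 α β =>
      exact .mp (.mp (.ax (KmAx.pc
        (taut1 (box α) (box (Form.neg α)) (Form.neg (box (Form.neg (α.imp β))))
          (Form.neg (box (Form.neg β))))))
        (hcirc α)) (.ax (KmAx.k2' α β))
  | m1 α β => exact .ax (KmAx.m1 α β)
  | m2 α β => exact .ax (KmAx.m2 α β)
  | m3 α β =>
      exact .mp (.mp (.mp (.ax (KmAx.pc
        (taut4 (box α) (box (Form.neg α)) (box (Form.neg (Form.neg α)))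
          (box (Form.neg β)) (box (Form.neg (α.imp β))))))
        (hcirc α)) (.ax (KmAx.dn2 α))) (.ax (KmAx.m3' α β))
  | m4 α β =>
      exact .mp (.mp (.mp (.mp (.ax (KmAx.pc
        (taut5 (box (Form.neg (Form.neg β))) (box β) (box (α.imp β))
          (box (Form.neg (α.imp β))) (box (Form.neg (Form.neg α))))))
        (.ax (KmAx.m4' α β))) (.ax (KmAx.dn2 β))) (.ax (KmAx.m2 α β)))
        (hcirc (α.imp β))
  | d α => exact hcirc α
  | dn1 α => exact .ax (KmAx.dn1 α)
  | dn2 α => exact .ax (KmAx.dn2 α)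

end DATaux

/-- Derivability Adjustment Theorem between Km and Dm. -/
theorem DAT_Km_Dm (Γ : Set Form) (φ : Form) :
    Deriv DmAx Γ φ ↔ ∃ Υ : Set Form, Deriv KmAx (Γ ∪ (circm '' Υ)) φ := by
  constructor
  · intro h
    refine ⟨Set.univ, ?_⟩
    induction h with
    | prem h => exact .prem (Or.inl h)
    | ax h => exact DATaux.dm_ax_in_km h
    | mp _ _ ih1 ih2 => exact .mp ih1 ih2
  · rintro ⟨Υ, h⟩
    induction h with
    | prem h =>
        rcases h with h | ⟨δ, _, rfl⟩
        · exact .prem h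
        · exact .ax (DmAx.d δ)
    | ax h => exact DATaux.km_ax_in_dm h
    | mp _ _ ih1 ih2 => exact .mp ih1 ih2
end

section
/- (Derivability Adjustment Theorem between Dm and Tm) For every finite set Γ ∪ {φ} of modal formulas: Γ ⊢_Tm φ if and only if there exists a set Υ of modal formulas such that Γ ∪ {∘'γ : γ ∈ Υ} ⊢_Dm φ, where ∘'γ denotes the formula (□γ→γ)∧(□¬γ→¬γ). -/
open Form

lemma taut_conj_left (X Y : Form) : Taut ((X.conj Y).imp X) := by
  intro v hn hi
  simp only [Form.conj, hn, hi]
  cases v X <;> cases v Y <;> rfl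

lemma taut_conj_intro (X Y : Form) : Taut (X.imp (Y.imp (X.conj Y))) := by
  intro v hn hi
  simp only [Form.conj, hn, hi]
  cases v X <;> cases v Y <;> rfl

lemma taut_D (α : Form) :
    Taut ((axT α).imp ((axT (Form.neg α)).imp (axD α))) := by
  intro v hn hi
  simp only [axT, axD, Form.dia, hn, hi]
  cases v (Form.box α) <;> cases v α <;> cases v (Form.box (Form.neg α)) <;> rfl

lemma tm_circ (Γ : Set Form) (α : Form) : Deriv TmAx Γ (circm' α) :=
  Deriv.mp
    (Deriv.mp (Deriv.ax (TmAx.pc (taut_conj_intro _ _))) (Deriv.ax (TmAx.t α)))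
    (Deriv.ax (TmAx.t (Form.neg α)))

lemma tm_D (Γ : Set Form) (α : Form) : Deriv TmAx Γ (axD α) :=
  Deriv.mp
    (Deriv.mp (Deriv.ax (TmAx.pc (taut_D α))) (Deriv.ax (TmAx.t α)))
    (Deriv.ax (TmAx.t (Form.neg α)))

/-- Derivability Adjustment Theorem between Dm and Tm. -/
theorem DAT_Dm_Tm (Γ : Set Form) (φ : Form) (hΓ : Γ.Finite) :
    Deriv TmAx Γ φ ↔ ∃ Υ : Set Form, Deriv DmAx (Γ ∪ (circm' '' Υ)) φ := by
  constructor
  · intro h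
    refine ⟨Set.univ, ?_⟩
    induction h with
    | prem h => exact Deriv.prem (Or.inl h)
    | mp _ _ ih1 ih2 => exact ih1.mp ih2
    | ax h =>
      cases h with
      | pc h => exact Deriv.ax (DmAx.pc h)
      | k α β => exact Deriv.ax (DmAx.k α β)
      | k1 α β => exact Deriv.ax (DmAx.k1 α β)
      | k2 α β => exact Deriv.ax (DmAx.k2 α β)
      | m1 α β => exact Deriv.ax (DmAx.m1 α β)
      | m2 α β => exact Deriv.ax (DmAx.m2 α β)
      | m3 α β => exact Deriv.ax (DmAx.m3 α β)
      | m4 α β => exact Deriv.ax (DmAx.m4 α β)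
      | dn1 α => exact Deriv.ax (DmAx.dn1 α)
      | dn2 α => exact Deriv.ax (DmAx.dn2 α)
      | t α =>
        exact Deriv.mp (Deriv.ax (DmAx.pc (taut_conj_left _ _)))
          (Deriv.prem (Or.inr ⟨α, trivial, rfl⟩))
  · rintro ⟨Υ, h⟩
    induction h with
    | prem h =>
      rcases h with h | ⟨γ, _, rfl⟩
      · exact Deriv.prem h
      · exact tm_circ Γ γ
    | mp _ _ ih1 ih2 => exact ih1.mp ih2
    | ax h =>
      cases h with
      | pc h => exact Deriv.ax (TmAx.pc h)
      | k α β => exact Deriv.ax (TmAx.k α β)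
      | k1 α β => exact Deriv.ax (TmAx.k1 α β)
      | k2 α β => exact Deriv.ax (TmAx.k2 α β)
      | m1 α β => exact Deriv.ax (TmAx.m1 α β)
      | m2 α β => exact Deriv.ax (TmAx.m2 α β)
      | m3 α β => exact Deriv.ax (TmAx.m3 α β)
      | m4 α β => exact Deriv.ax (TmAx.m4 α β)
      | dn1 α => exact Deriv.ax (TmAx.dn1 α)
      | dn2 α => exact Deriv.ax (TmAx.dn2 α)
      | d α => exact tm_D Γ α
end

section
/- Every instance of the axiom schema (K1) □(α→β)→(◇α→◇β) is derivable in the Hilbert calculus Tmd. Consequently, Tmd is equivalent to the system obtained by adding the axiom schema (Kdet) to Tm. -/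
open Form

lemma taut1 (A B C : Form) :
    Taut ((A.imp B).imp ((C.imp B.neg).imp (A.imp C.neg))) := by
  intro v hn hi
  simp only [hi, hn]
  cases v A <;> cases v B <;> cases v C <;> rfl

lemma taut2 (A B C D : Form) :
    Taut ((A.imp (B.imp C)).imp ((C.imp D).imp (A.imp (B.imp D)))) := by
  intro v hn hi
  simp only [hi, hn]
  cases v A <;> cases v B <;> cases v C <;> cases v D <;> rfl

lemma box_imp_dia (β : Form) : Deriv TmdAx ∅ ((box β).imp (dia β)) := by
  have h1 : Deriv TmdAx ∅ ((box β).imp β) := .ax (.t β)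
  have h2 : Deriv TmdAx ∅ ((box β.neg).imp β.neg) := .ax (.t β.neg)
  have ht : Deriv TmdAx ∅
      (((box β).imp β).imp (((box β.neg).imp β.neg).imp ((box β).imp (box β.neg).neg))) :=
    .ax (.pc (taut1 (box β) β (box β.neg)))
  exact .mp (.mp ht h1) h2

lemma tmd_K1 (α β : Form) : Deriv TmdAx ∅ (axK1 α β) := by
  have hk : Deriv TmdAx ∅ ((box (α.imp β)).imp ((dia α).imp (box β))) := .ax (.kdet α β)
  have hbd := box_imp_dia β
  have ht : Deriv TmdAx ∅
      (((box (α.imp β)).imp ((dia α).imp (box β))).imp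
        (((box β).imp (dia β)).imp ((box (α.imp β)).imp ((dia α).imp (dia β))))) :=
    .ax (.pc (taut2 (box (α.imp β)) (dia α) (box β) (dia β)))
  exact .mp (.mp ht hk) hbd

lemma deriv_weaken {Ax : Form → Prop} {Γ : Set Form} {φ : Form}
    (h : Deriv Ax ∅ φ) : Deriv Ax Γ φ := by
  induction h with
  | prem hp => exact absurd hp (Set.notMem_empty _)
  | ax ha => exact .ax ha
  | mp _ _ ih1 ih2 => exact .mp ih1 ih2

lemma deriv_mono {Ax Ax' : Form → Prop} {Γ : Set Form} {φ : Form}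
    (hax : ∀ ψ, Ax ψ → Deriv Ax' ∅ ψ) (h : Deriv Ax Γ φ) : Deriv Ax' Γ φ := by
  induction h with
  | prem hp => exact .prem hp
  | ax ha => exact deriv_weaken (hax _ ha)
  | mp _ _ ih1 ih2 => exact .mp ih1 ih2

/-- Every instance of (K1) is derivable in Tmd; consequently Tmd coincides with
the system obtained by adding (Kdet) to Tm. -/
theorem Tmd_derives_K1 :
    (∀ α β : Form, Deriv TmdAx ∅ (axK1 α β)) ∧
    (∀ (Γ : Set Form) (φ : Form), Deriv TmdAx Γ φ ↔ Deriv TmKdetAx Γ φ) := by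
  refine ⟨tmd_K1, fun Γ φ => ⟨deriv_mono ?_, deriv_mono ?_⟩⟩
  · rintro ψ (hp | k | kdet | k2 | m1 | m2 | m3 | m4 | t | dn1 | dn2)
    · exact .ax (.tm (.pc hp))
    · exact .ax (.tm (.k _ _))
    · exact .ax (.kdet _ _)
    · exact .ax (.tm (.k2 _ _))
    · exact .ax (.tm (.m1 _ _))
    · exact .ax (.tm (.m2 _ _))
    · exact .ax (.tm (.m3 _ _))
    · exact .ax (.tm (.m4 _ _))
    · exact .ax (.tm (.t _))
    · exact .ax (.tm (.dn1 _))
    · exact .ax (.tm (.dn2 _))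
  · rintro ψ (htm | kdet)
    · rcases htm with hp | k | k1 | k2 | m1 | m2 | m3 | m4 | t | dn1 | dn2
      · exact .ax (.pc hp)
      · exact .ax (.k _ _)
      · exact tmd_K1 _ _
      · exact .ax (.k2 _ _)
      · exact .ax (.m1 _ _)
      · exact .ax (.m2 _ _)
      · exact .ax (.m3 _ _)
      · exact .ax (.m4 _ _)
      · exact .ax (.t _)
      · exact .ax (.dn1 _)
      · exact .ax (.dn2 _)
    · exact .ax (.kdet _ _)
end

section
/- (Dugundji-type theorem) No system between Km and T45m can be characterized by a single finite deterministic logical matrix: there is no deterministic logical matrix (M, D) over {¬,→,□} with M finite such that both (a) Γ ⊢_Km α implies Γ ⊨_M α for all sets of formulas Γ and formulas α, and (b) every formula valid in (M,D) is a theorem of T45m. -/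
open Form

/-!
Put `χ i j := □(pᵢ → pⱼ) → □(pⱼ → pᵢ)` (`boxImpConverse`) and let `Φ m` (`dugundjiFormula`)
be the disjunction of the `χ i j` with `i < j < m`. In a matrix with fewer than `m` elements,
every valuation gives two variables `pᵢ, pⱼ` the same value, so it gives `χ i j` the value of
the tautology `χ i i`; a matrix in which Km is sound designates that value and hence, by the
tautology `χ i j → Φ m`, also `Φ m`. But `Φ m` fails in the S5 model on `ℕ` where `pₖ` holds
exactly at the worlds `≤ k`: there `□(pᵢ → pⱼ)` holds for `i < j`, while `pⱼ → pᵢ` fails at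
world `j`.
-/

def IsBoolVal (v : Form → Bool) : Prop :=
  (∀ α, v (Form.neg α) = !(v α)) ∧ (∀ α β, v (Form.imp α β) = (!(v α) || v β))

theorem Taut.eval_eq_true {φ : Form} (h : Taut φ) {v : Form → Bool} (hv : IsBoolVal v) :
    v φ = true :=
  h v hv.1 hv.2

theorem taut_imp_self_s18 (α : Form) : Taut (α.imp α) := by
  intro v _ himp
  rw [himp]
  cases v α <;> rfl

namespace Form

def bot : Form := neg ((var 0).imp (var 0))

def bigDisj (l : List Form) : Form := l.foldr disj bot

end Form

theorem IsBoolVal.bigDisj_eq_true_iff {v : Form → Bool} (hv : IsBoolVal v) (l : List Form) :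
    v (bigDisj l) = true ↔ ∃ ψ ∈ l, v ψ = true := by
  induction l with
  | nil =>
    simp only [bigDisj, List.foldr_nil, bot, hv.1, hv.2]
    cases v (var 0) <;> simp
  | cons a l ih =>
    simp only [bigDisj, List.foldr_cons, disj, hv.1, hv.2] at ih ⊢
    simp [ih]

theorem taut_imp_bigDisj {ψ : Form} {l : List Form} (hψ : ψ ∈ l) : Taut (ψ.imp (bigDisj l)) := by
  intro v hneg himp
  have hv : IsBoolVal v := ⟨hneg, himp⟩
  rw [himp, Bool.or_eq_true, hv.bigDisj_eq_true_iff]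
  cases hψv : v ψ
  · simp
  · exact Or.inr ⟨ψ, hψ, hψv⟩

def UnivSat {W : Type*} (V : ℕ → W → Prop) : Form → W → Prop
  | var k, w => V k w
  | neg a, w => ¬ UnivSat V a w
  | imp a b, w => UnivSat V a w → UnivSat V b w
  | box a, _ => ∀ u, UnivSat V a u

section UnivSat

variable {W : Type*} {V : ℕ → W → Prop}

@[simp] theorem univSat_var (k : ℕ) (w : W) : UnivSat V (var k) w ↔ V k w := Iff.rfl

@[simp] theorem univSat_neg (a : Form) (w : W) : UnivSat V (neg a) w ↔ ¬ UnivSat V a w := Iff.rfl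

@[simp] theorem univSat_imp (a b : Form) (w : W) :
    UnivSat V (imp a b) w ↔ (UnivSat V a w → UnivSat V b w) := Iff.rfl

@[simp] theorem univSat_box (a : Form) (w : W) : UnivSat V (box a) w ↔ ∀ u, UnivSat V a u :=
  Iff.rfl

@[simp] theorem univSat_dia (a : Form) (w : W) : UnivSat V (dia a) w ↔ ∃ u, UnivSat V a u := by
  simp [dia]

open Classical in
theorem isBoolVal_univSat (V : ℕ → W → Prop) (w : W) :
    IsBoolVal fun φ => decide (UnivSat V φ w) := by
  constructor <;> intros <;> simp [imp_iff_not_or]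

theorem univSat_of_taut {φ : Form} (h : Taut φ) (w : W) : UnivSat V φ w := by
  classical
  simpa using h.eval_eq_true (isBoolVal_univSat V w)

theorem univSat_of_TmAx {φ : Form} (h : TmAx φ) (w : W) : UnivSat V φ w := by
  cases h with
  | pc h => exact univSat_of_taut h w
  | k | k1 | k2 | m1 | m2 | m3 | m4 | t | dn1 | dn2 =>
    simp only [axK, axK1, axK2, axM1, axM2, axM3, axM4, axT, axDN1, axDN2, univSat_imp,
      univSat_box, univSat_dia, univSat_neg]
    grind

theorem univSat_of_T45mAx {φ : Form} (h : T45mAx φ) (w : W) : UnivSat V φ w := by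
  cases h with
  | tm h => exact univSat_of_TmAx h w
  | four | five =>
    simp only [ax4, ax5, univSat_imp, univSat_box, univSat_dia]
    grind

theorem univSat_of_deriv_T45m {Γ : Set Form} {φ : Form} (h : Deriv T45mAx Γ φ)
    (hΓ : ∀ γ ∈ Γ, ∀ w, UnivSat V γ w) (w : W) : UnivSat V φ w := by
  induction h generalizing w with
  | prem hφ => exact hΓ _ hφ w
  | ax hφ => exact univSat_of_T45mAx hφ w
  | mp _ _ ihφψ ihφ => exact ihφψ w (ihφ w)

end UnivSat

def boxImpConverse (i j : ℕ) : Form :=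
  (box ((var i).imp (var j))).imp (box ((var j).imp (var i)))

def boxImpConverses (m : ℕ) : List Form :=
  (List.range m).flatMap fun j => (List.range j).map fun i => boxImpConverse i j

theorem mem_boxImpConverses {m : ℕ} {ψ : Form} :
    ψ ∈ boxImpConverses m ↔ ∃ j < m, ∃ i < j, boxImpConverse i j = ψ := by
  simp [boxImpConverses]

def dugundjiFormula (m : ℕ) : Form := bigDisj (boxImpConverses m)

theorem not_univSat_boxImpConverse {i j : ℕ} (hij : i < j) (w : ℕ) :
    ¬ UnivSat (fun k w => w ≤ k) (boxImpConverse i j) w := by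
  simp only [boxImpConverse, univSat_imp, univSat_box, univSat_var, not_forall]
  exact ⟨fun u hu => hu.trans hij.le, j, le_rfl, by omega⟩

theorem not_univSat_dugundjiFormula (m w : ℕ) :
    ¬ UnivSat (fun k w => w ≤ k) (dugundjiFormula m) w := by
  classical
  intro hsat
  obtain ⟨ψ, hψ, hψsat⟩ :=
    ((isBoolVal_univSat _ w).bigDisj_eq_true_iff _).mp (decide_eq_true hsat)
  obtain ⟨j, -, i, hij, rfl⟩ := mem_boxImpConverses.mp hψ
  exact not_univSat_boxImpConverse hij w (of_decide_eq_true hψsat)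

theorem not_deriv_T45m_dugundjiFormula (m : ℕ) : ¬ Deriv T45mAx ∅ (dugundjiFormula m) :=
  fun h => not_univSat_dugundjiFormula m 0 (univSat_of_deriv_T45m h (by simp) 0)

namespace DetMatrix

variable {Mat : DetMatrix} {h : Form → Mat.carrier}

theorem IsVal.boxImpConverse_eq (hh : Mat.IsVal h) {i j : ℕ} (hij : h (var i) = h (var j)) :
    h (boxImpConverse i j) = h (boxImpConverse i i) := by
  simp only [boxImpConverse, hh.2.1, hh.2.2, hij]

theorem valid_dugundjiFormula [Finite Mat.carrier]
    (hsound : ∀ (Γ : Set Form) (α : Form), Deriv KmAx Γ α → Mat.Entails Γ α)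
    {m : ℕ} (hm : Nat.card Mat.carrier < m) : Mat.Valid (dugundjiFormula m) := by
  intro h hh
  have hnotinj : ¬ Function.Injective fun i : Fin m => h (var i) := fun hinj =>
    (Nat.card_le_card_of_injective _ hinj).not_gt (by simpa using hm)
  obtain ⟨i, j, hij, hne⟩ := Function.not_injective_iff.mp hnotinj
  wlog hlt : i < j generalizing i j
  · exact this j i hij.symm hne.symm ((Fin.lt_or_lt_of_ne hne).resolve_left hlt)
  have hχ : h (boxImpConverse i j) ∈ Mat.desig := by
    rw [hh.boxImpConverse_eq hij]
    exact hsound ∅ _ (.ax (.pc (taut_imp_self_s18 _))) h hh (by simp)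
  have hderiv : Deriv KmAx {boxImpConverse i j} (dugundjiFormula m) := by
    have hmem := mem_boxImpConverses.mpr ⟨j, j.isLt, i, hlt, rfl⟩
    exact .mp (.ax (.pc (taut_imp_bigDisj hmem))) (.prem rfl)
  exact hsound _ _ hderiv h hh (by simpa using hχ)

end DetMatrix

/-- Dugundji-type theorem: no system between Km and T45m can be characterized by a
single finite deterministic logical matrix. -/
theorem no_finite_matrix_between_Km_T45m :
    ¬ ∃ Mat : DetMatrix, Finite Mat.carrier ∧
        (∀ (Γ : Set Form) (α : Form), Deriv KmAx Γ α → Mat.Entails Γ α) ∧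
        (∀ φ : Form, Mat.Valid φ → Deriv T45mAx ∅ φ) := by
  rintro ⟨Mat, hfin, hsound, hcomplete⟩
  exact not_deriv_T45m_dugundjiFormula _
    (hcomplete _ (Mat.valid_dugundjiFormula hsound (Nat.lt_succ_self _)))
end
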